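/- For every n ≥ 1 and every r₀ ∈ (−n/2, ∞), there exists a measurable g ∈ L²(ℝⁿ) (for example g(ξ) = |ξ|^{r₀} log|ξ| for 0 < |ξ| ≤ 1/2 and g(ξ) = 0 otherwise) such that the upper and lower decay characters satisfy r(g)₊ = r(g)₋ = r₀, while P_{r₀}(g)₋ = P_{r₀}(g)₊ = +∞. In particular the supremum defining r(g)₊ is not attained, and there is no r ∈ ℝ with 0 < P_r(g)₋ ≤ P_r(g)₊ < ∞: the decay character of g does not exist even though r(g)₊ = r(g)₋. -/

import Mathlib

open MeasureTheory Filter Topology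
open scoped ENNReal NNReal

noncomputable section

/-- The quantity `ρ^{-(2r+n)} ∫_{|ξ|≤ρ} |g(ξ)|² dξ`, valued in `[0,∞]`. -/
def decayFun (n : ℕ) (g : EuclideanSpace ℝ (Fin n) → ℂ) (r ρ : ℝ) : ℝ≥0∞ :=
  ENNReal.ofReal (ρ ^ (-(2 * r + (n : ℝ)))) *
    ∫⁻ ξ in {ξ : EuclideanSpace ℝ (Fin n) | ‖ξ‖ ≤ ρ}, ENNReal.ofReal (‖g ξ‖ ^ 2)

/-- Lower decay indicator `P_r(g)₋`. -/
def Pminus (n : ℕ) (g : EuclideanSpace ℝ (Fin n) → ℂ) (r : ℝ) : ℝ≥0∞ :=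
  liminf (fun ρ : ℝ => decayFun n g r ρ) (𝓝[>] (0 : ℝ))

/-- Upper decay indicator `P_r(g)₊`. -/
def Pplus (n : ℕ) (g : EuclideanSpace ℝ (Fin n) → ℂ) (r : ℝ) : ℝ≥0∞ :=
  limsup (fun ρ : ℝ => decayFun n g r ρ) (𝓝[>] (0 : ℝ))

/-- Upper decay character `r(g)₊ = sup {r : P_r(g)₊ < ∞}`, as an extended real. -/
def rPlus (n : ℕ) (g : EuclideanSpace ℝ (Fin n) → ℂ) : EReal :=
  sSup {x : EReal | ∃ r : ℝ, x = (r : EReal) ∧ Pplus n g r < ⊤}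

/-- Lower decay character `r(g)₋ = inf {r : P_r(g)₋ > 0}`, as an extended real
(with `inf ∅ = +∞`). -/
def rMinus (n : ℕ) (g : EuclideanSpace ℝ (Fin n) → ℂ) : EReal :=
  sInf {x : EReal | ∃ r : ℝ, x = (r : EReal) ∧ 0 < Pminus n g r}

/-! The example is radial, so substituting `ξ = ρ • η` turns `∫_{‖ξ‖≤ρ} |g|²` into
`ρⁿ ∫_{‖η‖≤1} |g(ρη)|²`. Since `log² t ≤ (2/ε)² t^{-ε}` on `(0, 1]`, this is `O(ρ^{2r₀-ε+n})`, so
`P_r(g)₊ = 0` for every `r < r₀`; since `log²(ρ‖η‖) ≥ log² ρ`, it is at least a constant times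
`ρ^{2r₀+n} log² ρ`, so `P_{r₀}(g)₋ = ∞`. As `ρ^{-(2r+n)}` increases with `r` for `ρ ≤ 1`, these two
facts alone determine both decay characters and rule out every `r` with `0 < P_r₋ ≤ P_r₊ < ∞`. -/

open Metric Module

/-- At `t = 0` this is `0`, because `Real.log 0 = 0`. -/
def rpowLogCutoff (r₀ t : ℝ) : ℝ := if t ≤ 1 / 2 then t ^ r₀ * Real.log t else 0

namespace rpowLogCutoff

variable (r₀ : ℝ)

@[simp] theorem zero : rpowLogCutoff r₀ 0 = 0 := by simp [rpowLogCutoff]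

theorem eq_zero_of_lt {t : ℝ} (ht : 1 / 2 < t) : rpowLogCutoff r₀ t = 0 :=
  if_neg ht.not_ge

@[fun_prop] theorem measurable : Measurable (rpowLogCutoff r₀) :=
  Measurable.ite measurableSet_Iic (by fun_prop) measurable_const

theorem sq_le {ε : ℝ} (hε : 0 < ε) {t : ℝ} (ht : 0 < t) :
    rpowLogCutoff r₀ t ^ 2 ≤ (2 / ε) ^ 2 * t ^ (2 * r₀ - ε) := by
  unfold rpowLogCutoff
  split_ifs with ht2
  · have hlog : |Real.log t * t ^ (ε / 2)| ≤ 2 / ε := by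
      simpa [one_div_div] using (Real.abs_log_mul_self_rpow_lt t (ε / 2) ht (by linarith)
        (by positivity)).le
    have hsplit :
        (t ^ r₀ * Real.log t) ^ 2 = t ^ (2 * r₀ - ε) * (Real.log t * t ^ (ε / 2)) ^ 2 := by
      rw [mul_pow, mul_pow, ← Real.rpow_mul_natCast ht.le, ← Real.rpow_mul_natCast ht.le]
      ring_nf
      rw [mul_assoc, ← Real.rpow_add ht]
      ring_nf
    rw [hsplit, mul_comm]
    exact mul_le_mul_of_nonneg_right (sq_le_sq' (abs_le.1 hlog).1 (abs_le.1 hlog).2) (by positivity)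
  · rw [zero_pow two_ne_zero]
    positivity

theorem sq_ge {ρ s : ℝ} (hρ : 0 < ρ) (hρ2 : ρ ≤ 1 / 2) (hs : 0 < s) (hs1 : s ≤ 1) :
    ρ ^ (2 * r₀) * Real.log ρ ^ 2 * s ^ (2 * r₀) ≤ rpowLogCutoff r₀ (ρ * s) ^ 2 := by
  have hρs : ρ * s ≤ 1 / 2 := by nlinarith
  have hlogρ : Real.log ρ ≤ 0 := Real.log_nonpos hρ.le (by linarith)
  have hlogs : Real.log s ≤ 0 := Real.log_nonpos hs.le hs1
  have hsq : ∀ x : ℝ, 0 ≤ x → (x ^ r₀) ^ 2 = x ^ (2 * r₀) := fun x hx ↦ by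
    rw [← Real.rpow_mul_natCast hx, mul_comm]; norm_num
  have hlog : Real.log ρ ^ 2 ≤ (Real.log ρ + Real.log s) ^ 2 := by nlinarith
  rw [rpowLogCutoff, if_pos hρs, Real.mul_rpow hρ.le hs.le, Real.log_mul hρ.ne' hs.ne', mul_pow,
    mul_pow, hsq ρ hρ.le, hsq s hs.le, mul_right_comm]
  gcongr

end rpowLogCutoff

section HaarBall

variable {E : Type*} [NormedAddCommGroup E] [NormedSpace ℝ E] [FiniteDimensional ℝ E]
  [MeasurableSpace E] [BorelSpace E] (μ : Measure E) [μ.IsAddHaarMeasure] (r₀ : ℝ)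

theorem setLIntegral_closedBall_eq_mul_comp_smul {f : E → ℝ≥0∞} (hf : Measurable f) {ρ : ℝ}
    (hρ : 0 < ρ) :
    ∫⁻ x in closedBall 0 ρ, f x ∂μ =
      ENNReal.ofReal (ρ ^ finrank ℝ E) * ∫⁻ y in closedBall 0 1, f (ρ • y) ∂μ := by
  have hμ : μ = ENNReal.ofReal (ρ ^ finrank ℝ E) • Measure.map (ρ • ·) μ := by
    rw [Measure.map_addHaar_smul μ hρ.ne', smul_smul, ← ENNReal.ofReal_mul (by positivity),
      abs_of_pos (by positivity), mul_inv_cancel₀ (by positivity), ENNReal.ofReal_one, one_smul]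
  have hpre : (ρ • · : E → E) ⁻¹' closedBall 0 ρ = closedBall 0 1 := by
    ext y
    simp [norm_smul, abs_of_pos hρ, mul_le_iff_le_one_right hρ]
  conv_lhs => rw [hμ]
  rw [Measure.restrict_smul, lintegral_smul_measure, setLIntegral_map measurableSet_closedBall hf
    (measurable_const_smul ρ), hpre, smul_eq_mul]

theorem setLIntegral_closedBall_norm_rpow_lt_top [Nontrivial E] {b : ℝ}
    (hb : -(finrank ℝ E : ℝ) < b) :
    ∫⁻ y in closedBall 0 1, ENNReal.ofReal (‖y‖ ^ b) ∂μ < ⊤ := by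
  have hint : IntegrableOn (fun y : E ↦ ‖y‖ ^ b) (ball 0 2) μ := by
    refine integrableOn_ball_of_norm_le_rpow (C := 1) (α := -b) Module.finrank_pos (by linarith)
      (.of_forall fun y ↦ ?_)
      (measurable_norm.pow_const b).aestronglyMeasurable
    rw [neg_neg, one_mul, Real.norm_of_nonneg (by positivity)]
  exact (hint.mono_set (closedBall_subset_ball one_lt_two)).lintegral_lt_top

theorem setLIntegral_closedBall_norm_rpow_pos [Nontrivial E] (b : ℝ) :
    0 < ∫⁻ y in closedBall 0 1, ENNReal.ofReal (‖y‖ ^ b) ∂μ := by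
  rw [lintegral_pos_iff_support (by fun_prop), Measure.restrict_apply' measurableSet_closedBall]
  calc 0 < μ (closedBall 0 1) := measure_closedBall_pos μ 0 one_pos
    _ = μ (closedBall 0 1 \ {0}) := (measure_sdiff_null (measure_singleton 0)).symm
    _ ≤ _ := by
      refine measure_mono fun y ⟨hy, hy0⟩ ↦ ⟨?_, hy⟩
      simpa using Real.rpow_pos_of_pos (norm_pos_iff.2 hy0) b

theorem setLIntegral_closedBall_rpowLogCutoff_sq_le [Nontrivial E] {ε : ℝ} (hε : 0 < ε)
    (hb : -(finrank ℝ E : ℝ) < 2 * r₀ - ε) :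
    ∃ C ≠ ⊤, ∀ ρ > 0, ∫⁻ x in closedBall 0 ρ, ENNReal.ofReal (rpowLogCutoff r₀ ‖x‖ ^ 2) ∂μ ≤
      C * ENNReal.ofReal (ρ ^ (2 * r₀ - ε + finrank ℝ E)) := by
  set a := 2 * r₀ - ε
  set K := ∫⁻ y in closedBall 0 1, ENNReal.ofReal (‖y‖ ^ a) ∂μ
  refine ⟨ENNReal.ofReal ((2 / ε) ^ 2) * K,
    ENNReal.mul_ne_top ENNReal.ofReal_ne_top (setLIntegral_closedBall_norm_rpow_lt_top μ hb).ne,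
    fun ρ hρ ↦ ?_⟩
  have hpt : ∀ y : E, ENNReal.ofReal (rpowLogCutoff r₀ ‖ρ • y‖ ^ 2) ≤
      ENNReal.ofReal ((2 / ε) ^ 2 * ρ ^ a) * ENNReal.ofReal (‖y‖ ^ a) := fun y ↦ by
    rw [← ENNReal.ofReal_mul (by positivity)]
    refine ENNReal.ofReal_le_ofReal ?_
    rcases eq_or_ne y 0 with rfl | hy
    · simp only [smul_zero, norm_zero, rpowLogCutoff.zero, zero_pow two_ne_zero]
      positivity
    calc rpowLogCutoff r₀ ‖ρ • y‖ ^ 2 ≤ (2 / ε) ^ 2 * ‖ρ • y‖ ^ a :=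
          rpowLogCutoff.sq_le r₀ hε (norm_pos_iff.2 (smul_ne_zero hρ.ne' hy))
      _ = (2 / ε) ^ 2 * ρ ^ a * ‖y‖ ^ a := by
          rw [norm_smul, Real.norm_of_nonneg hρ.le, Real.mul_rpow hρ.le (norm_nonneg y), mul_assoc]
  calc ∫⁻ x in closedBall 0 ρ, ENNReal.ofReal (rpowLogCutoff r₀ ‖x‖ ^ 2) ∂μ
      = ENNReal.ofReal (ρ ^ finrank ℝ E) *
          ∫⁻ y in closedBall 0 1, ENNReal.ofReal (rpowLogCutoff r₀ ‖ρ • y‖ ^ 2) ∂μ :=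
        setLIntegral_closedBall_eq_mul_comp_smul μ (by fun_prop) hρ
    _ ≤ ENNReal.ofReal (ρ ^ finrank ℝ E) * ∫⁻ y in closedBall 0 1,
          ENNReal.ofReal ((2 / ε) ^ 2 * ρ ^ a) * ENNReal.ofReal (‖y‖ ^ a) ∂μ := by
        gcongr with y
        exact hpt y
    _ = ENNReal.ofReal ((2 / ε) ^ 2) * K * ENNReal.ofReal (ρ ^ (a + finrank ℝ E)) := by
        rw [lintegral_const_mul _ (by fun_prop), Real.rpow_add hρ, Real.rpow_natCast,
          ENNReal.ofReal_mul (by positivity), ENNReal.ofReal_mul (by positivity)]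
        ring

theorem le_setLIntegral_closedBall_rpowLogCutoff_sq [Nontrivial E] {ρ : ℝ} (hρ : 0 < ρ)
    (hρ2 : ρ ≤ 1 / 2) :
    ENNReal.ofReal (ρ ^ (2 * r₀ + finrank ℝ E) * Real.log ρ ^ 2) *
        ∫⁻ y in closedBall 0 1, ENNReal.ofReal (‖y‖ ^ (2 * r₀)) ∂μ ≤
      ∫⁻ x in closedBall 0 ρ, ENNReal.ofReal (rpowLogCutoff r₀ ‖x‖ ^ 2) ∂μ := by
  have hpt : ∀ᵐ y ∂μ.restrict (closedBall 0 1),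
      ENNReal.ofReal (ρ ^ (2 * r₀) * Real.log ρ ^ 2) * ENNReal.ofReal (‖y‖ ^ (2 * r₀)) ≤
        ENNReal.ofReal (rpowLogCutoff r₀ ‖ρ • y‖ ^ 2) := by
    filter_upwards [ae_restrict_mem measurableSet_closedBall,
      ae_restrict_of_ae (compl_mem_ae_iff.2 (measure_singleton (0 : E)))] with y hy hy0
    rw [← ENNReal.ofReal_mul (by positivity), norm_smul, Real.norm_of_nonneg hρ.le]
    exact ENNReal.ofReal_le_ofReal (rpowLogCutoff.sq_ge r₀ hρ hρ2 (norm_pos_iff.2 hy0)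
      (mem_closedBall_zero_iff.1 hy))
  rw [setLIntegral_closedBall_eq_mul_comp_smul μ (by fun_prop) hρ, Real.rpow_add hρ,
    Real.rpow_natCast, mul_comm (ρ ^ _), mul_assoc, ENNReal.ofReal_mul (by positivity), mul_assoc,
    ← lintegral_const_mul _ (by fun_prop)]
  exact mul_le_mul_right (lintegral_mono_ae hpt) _

end HaarBall

section DecayCharacter

variable {n : ℕ} {g : EuclideanSpace ℝ (Fin n) → ℂ}

theorem decayFun_eq (g : EuclideanSpace ℝ (Fin n) → ℂ) (r ρ : ℝ) :
    decayFun n g r ρ = ENNReal.ofReal (ρ ^ (-(2 * r + (n : ℝ)))) *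
      ∫⁻ ξ in closedBall 0 ρ, ENNReal.ofReal (‖g ξ‖ ^ 2) := by
  simp only [decayFun, ← mem_closedBall_zero_iff, Set.ofPred_mem_eq]

theorem decayFun_le_decayFun {r r' ρ : ℝ} (hr : r ≤ r') (hρ : ρ ∈ Set.Ioc 0 1) :
    decayFun n g r ρ ≤ decayFun n g r' ρ := by
  unfold decayFun
  exact mul_le_mul_left
    (ENNReal.ofReal_le_ofReal (Real.rpow_le_rpow_of_exponent_ge hρ.1 hρ.2 (by linarith))) _

theorem Pplus_monotone : Monotone (Pplus n g) := fun _ _ hr ↦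
  limsup_le_limsup <| mem_of_superset (Ioc_mem_nhdsGT one_pos) fun _ hρ ↦ decayFun_le_decayFun hr hρ

theorem Pminus_le_Pplus (r : ℝ) : Pminus n g r ≤ Pplus n g r := liminf_le_limsup

variable {r₀ : ℝ}

theorem Pplus_eq_top (h_top : Pminus n g r₀ = ⊤) {r : ℝ} (hr : r₀ ≤ r) : Pplus n g r = ⊤ :=
  top_le_iff.1 (h_top ▸ (Pminus_le_Pplus r₀).trans (Pplus_monotone hr))

theorem rPlus_eq (h_lt : ∀ r < r₀, Pplus n g r = 0) (h_top : Pminus n g r₀ = ⊤) :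
    rPlus n g = r₀ := by
  refine IsLUB.sSup_eq ⟨?_, fun b hb ↦ le_of_forall_lt fun c hc ↦ ?_⟩
  · rintro _ ⟨r, rfl, hr⟩
    by_contra! h
    exact (Pplus_eq_top h_top (EReal.coe_lt_coe_iff.1 h).le ▸ hr).false
  · obtain ⟨x, hcx, hx⟩ := EReal.exists_between_coe_real hc
    exact hcx.trans_le (hb ⟨x, rfl, by simp [h_lt x (EReal.coe_lt_coe_iff.1 hx)]⟩)

theorem rMinus_eq (h_lt : ∀ r < r₀, Pplus n g r = 0) (h_top : Pminus n g r₀ = ⊤) :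
    rMinus n g = r₀ := by
  refine IsGLB.sInf_eq (IsLeast.isGLB ⟨⟨r₀, rfl, by simp [h_top]⟩, ?_⟩)
  rintro _ ⟨r, rfl, hr⟩
  by_contra! h
  have := (Pminus_le_Pplus r).trans (h_lt r (EReal.coe_lt_coe_iff.1 h)).le
  exact (hr.trans_le this).false

theorem not_exists_Pminus_pos_Pplus_lt_top (h_lt : ∀ r < r₀, Pplus n g r = 0)
    (h_top : Pminus n g r₀ = ⊤) : ¬ ∃ r : ℝ, 0 < Pminus n g r ∧ Pplus n g r < ⊤ := by
  rintro ⟨r, hpos, hfin⟩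
  rcases lt_or_ge r r₀ with h | h
  · exact (hpos.trans_le ((Pminus_le_Pplus r).trans (h_lt r h).le)).false
  · exact (Pplus_eq_top h_top h ▸ hfin).false

end DecayCharacter

def logDecayExample (n : ℕ) (r₀ : ℝ) (ξ : EuclideanSpace ℝ (Fin n)) : ℂ := rpowLogCutoff r₀ ‖ξ‖

namespace logDecayExample

variable (n : ℕ) (r₀ : ℝ)

theorem measurable : Measurable (logDecayExample n r₀) := by
  unfold logDecayExample
  fun_prop

theorem norm_sq (ξ : EuclideanSpace ℝ (Fin n)) :
    ‖logDecayExample n r₀ ξ‖ ^ 2 = rpowLogCutoff r₀ ‖ξ‖ ^ 2 := by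
  rw [logDecayExample, Complex.norm_real, Real.norm_eq_abs, sq_abs]

variable [NeZero n] {n r₀}

theorem decayFun_le {ε : ℝ} (hε : 0 < ε) (hb : -(n : ℝ) < 2 * r₀ - ε) :
    ∃ C ≠ ⊤, ∀ r, ∀ ρ > 0, decayFun n (logDecayExample n r₀) r ρ ≤
      C * ENNReal.ofReal (ρ ^ (2 * r₀ - ε - 2 * r)) := by
  have hdim : (finrank ℝ (EuclideanSpace ℝ (Fin n)) : ℝ) = n := by simp
  obtain ⟨C, hC, hle⟩ := setLIntegral_closedBall_rpowLogCutoff_sq_le volume r₀ hε (by rwa [hdim])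
  rw [hdim] at hle
  refine ⟨C, hC, fun r ρ hρ ↦ ?_⟩
  simp only [decayFun_eq, norm_sq]
  calc _ ≤ ENNReal.ofReal (ρ ^ (-(2 * r + n))) * (C * ENNReal.ofReal (ρ ^ (2 * r₀ - ε + n))) :=
        mul_le_mul_right (hle ρ hρ) _
    _ = C * ENNReal.ofReal (ρ ^ (2 * r₀ - ε - 2 * r)) := by
        rw [mul_left_comm, ← ENNReal.ofReal_mul (by positivity), ← Real.rpow_add hρ]
        ring_nf

theorem Pplus_eq_zero (hlow : -(n : ℝ) / 2 < r₀) {r : ℝ} (hr : r < r₀) :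
    Pplus n (logDecayExample n r₀) r = 0 := by
  -- `ε ≤ r₀ + n/2` keeps `‖ξ‖^(2r₀-ε)` integrable at `0`, `ε ≤ r₀ - r` leaves a positive power of `ρ`
  set ε := min (r₀ - r) (r₀ + n / 2)
  have hε : 0 < ε := lt_min (by linarith) (by linarith)
  obtain ⟨C, hC, hle⟩ :=
    decayFun_le (r₀ := r₀) hε (by linarith [min_le_right (r₀ - r) (r₀ + n / 2)])
  have hδ : 0 < 2 * r₀ - ε - 2 * r := by linarith [min_le_left (r₀ - r) (r₀ + n / 2)]
  have hbound : Tendsto (fun ρ : ℝ ↦ C * ENNReal.ofReal (ρ ^ (2 * r₀ - ε - 2 * r)))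
      (𝓝[>] 0) (𝓝 0) := by
    have hpow : Tendsto (fun ρ : ℝ ↦ ρ ^ (2 * r₀ - ε - 2 * r)) (𝓝[>] 0) (𝓝 0) := by
      simpa [Real.zero_rpow hδ.ne'] using
        (Real.continuousAt_rpow_const 0 _ (Or.inr hδ.le)).tendsto.mono_left nhdsWithin_le_nhds
    simpa using ENNReal.Tendsto.const_mul (ENNReal.tendsto_ofReal hpow) (Or.inr hC)
  exact (tendsto_of_tendsto_of_tendsto_of_le_of_le' tendsto_const_nhds hbound
    (.of_forall fun _ ↦ zero_le) (eventually_mem_nhdsWithin.mono (hle r))).limsup_eq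

theorem Pminus_eq_top : Pminus n (logDecayExample n r₀) r₀ = ⊤ := by
  set K := ∫⁻ y in closedBall (0 : EuclideanSpace ℝ (Fin n)) 1, ENNReal.ofReal (‖y‖ ^ (2 * r₀))
  have hK : K ≠ 0 := (setLIntegral_closedBall_norm_rpow_pos
    (volume : Measure (EuclideanSpace ℝ (Fin n))) _).ne'
  have hle : ∀ ρ ∈ Set.Ioc (0 : ℝ) (1 / 2),
      ENNReal.ofReal (Real.log ρ ^ 2) * K ≤ decayFun n (logDecayExample n r₀) r₀ ρ := by
    rintro ρ ⟨hρ, hρ2⟩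
    have h := le_setLIntegral_closedBall_rpowLogCutoff_sq
      (volume : Measure (EuclideanSpace ℝ (Fin n))) r₀ hρ hρ2
    rw [finrank_euclideanSpace_fin] at h
    simp only [decayFun_eq, norm_sq]
    calc ENNReal.ofReal (Real.log ρ ^ 2) * K
        = ENNReal.ofReal (ρ ^ (-(2 * r₀ + n))) *
            (ENNReal.ofReal (ρ ^ (2 * r₀ + n) * Real.log ρ ^ 2) * K) := by
          rw [← mul_assoc, ← ENNReal.ofReal_mul (by positivity), ← mul_assoc,
            ← Real.rpow_add hρ, neg_add_cancel, Real.rpow_zero, one_mul]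
      _ ≤ _ := mul_le_mul_right h _
  have hlog : Tendsto (fun ρ ↦ ENNReal.ofReal (Real.log ρ ^ 2) * K) (𝓝[>] 0) (𝓝 ⊤) := by
    have hsq : Tendsto (fun ρ : ℝ ↦ Real.log ρ ^ 2) (𝓝[>] 0) atTop := by
      simpa only [sq] using
        Real.tendsto_log_nhdsGT_zero.atBot_mul_atBot₀ Real.tendsto_log_nhdsGT_zero
    have h := ENNReal.Tendsto.mul_const (b := K) (ENNReal.tendsto_ofReal_atTop.comp hsq)
      (Or.inl ENNReal.top_ne_zero)
    rwa [ENNReal.top_mul hK] at h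
  exact (tendsto_nhds_top_mono hlog
    (mem_of_superset (Ioc_mem_nhdsGT one_half_pos) hle)).liminf_eq

theorem memLp (hlow : -(n : ℝ) / 2 < r₀) :
    MemLp (logDecayExample n r₀) 2 (volume : Measure (EuclideanSpace ℝ (Fin n))) := by
  have hmeas := (measurable n r₀).aestronglyMeasurable (μ := volume)
  refine (memLp_two_iff_integrable_sq_norm hmeas).2 ⟨(hmeas.norm.pow 2), ?_⟩
  have hsupp : (Function.support fun ξ ↦ ENNReal.ofReal (rpowLogCutoff r₀ ‖ξ‖ ^ 2)) ⊆
      closedBall (0 : EuclideanSpace ℝ (Fin n)) (1 / 2) := fun ξ hξ ↦ by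
    by_contra h
    rw [mem_closedBall_zero_iff, not_le] at h
    simp [rpowLogCutoff.eq_zero_of_lt r₀ h] at hξ
  have hdim : (finrank ℝ (EuclideanSpace ℝ (Fin n)) : ℝ) = n := by simp
  obtain ⟨C, hC, hle⟩ := setLIntegral_closedBall_rpowLogCutoff_sq_le
    (volume : Measure (EuclideanSpace ℝ (Fin n))) r₀ (ε := r₀ + n / 2) (by linarith)
    (by rw [hdim]; linarith)
  rw [hasFiniteIntegral_iff_ofReal (.of_forall fun _ ↦ by positivity)]
  simp only [norm_sq]
  rw [← setLIntegral_eq_of_support_subset hsupp]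
  exact (hle _ one_half_pos).trans_lt (ENNReal.mul_lt_top hC.lt_top ENNReal.ofReal_lt_top)

end logDecayExample

theorem stmt18 (n : ℕ) (hn : 1 ≤ n) (r₀ : ℝ) (hlow : -(n : ℝ) / 2 < r₀) :
    ∃ g : EuclideanSpace ℝ (Fin n) → ℂ, Measurable g ∧
      MemLp g 2 (volume : Measure (EuclideanSpace ℝ (Fin n))) ∧
      rPlus n g = (r₀ : EReal) ∧ rMinus n g = (r₀ : EReal) ∧
      Pminus n g r₀ = ⊤ ∧ Pplus n g r₀ = ⊤ ∧
      ¬ ∃ r : ℝ, 0 < Pminus n g r ∧ Pplus n g r < ⊤ := by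
  have : NeZero n := ⟨by omega⟩
  have h_lt := fun r ↦ logDecayExample.Pplus_eq_zero (n := n) hlow (r := r)
  have h_top := logDecayExample.Pminus_eq_top (n := n) (r₀ := r₀)
  exact ⟨logDecayExample n r₀, logDecayExample.measurable n r₀, logDecayExample.memLp hlow,
    rPlus_eq h_lt h_top, rMinus_eq h_lt h_top, h_top, Pplus_eq_top h_top le_rfl,
    not_exists_Pminus_pos_Pplus_lt_top h_lt h_top⟩
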